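/- arXiv:1303.4938 — 3 statements merged into one kernel-verified Lean document; each statement's English description precedes it below -/
import Mathlib

section
/- Let Λ ⊆ ℂ be a lattice and let ω, ω' ∈ ℂ be nonzero with ω·Λ ⊆ Λ and ω'·Λ ⊆ Λ. The diagonal Δ ⊆ E × E is pre-periodic for the product map [ω] × [ω'] : E × E → E × E if and only if the diagonal Δ' ⊆ E/± × E/± is pre-periodic for the product map φ_ω × φ_{ω'} : E/± × E/± → E/± × E/±. -/
open Complex

noncomputable section

/-- The analytic model `E = ℂ/Λ` of an elliptic curve with period lattice `Λ`. -/
abbrev EC (Λ : AddSubgroup ℂ) : Type := ℂ ⧸ Λ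

/-- The endomorphism `[ω] : E → E` induced by multiplication by `ω` on `ℂ`,
for `ω` with `ω·Λ ⊆ Λ`. -/
def mulE (Λ : AddSubgroup ℂ) (ω : ℂ) (hω : ∀ x ∈ Λ, ω * x ∈ Λ) : EC Λ →+ EC Λ :=
  QuotientAddGroup.map Λ Λ (AddMonoidHom.mulLeft ω) (fun x hx => hω x hx)

/-- The relation identifying a point of `E` with its negative. -/
def negRel (Λ : AddSubgroup ℂ) (x y : EC Λ) : Prop := x = y ∨ x = -y

/-- The quotient `E/±` of `E` by the involution `z ↦ -z`. -/
abbrev ECpm (Λ : AddSubgroup ℂ) : Type := Quot (negRel Λ)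

/-- The quotient map `q : E → E/±`. -/
def qpm (Λ : AddSubgroup ℂ) : EC Λ → ECpm Λ := Quot.mk _

/-- The Lattès-type map `φ_ω : E/± → E/±` induced by `[ω]`. -/
def lattes (Λ : AddSubgroup ℂ) (ω : ℂ) (hω : ∀ x ∈ Λ, ω * x ∈ Λ) :
    ECpm Λ → ECpm Λ :=
  Quot.map (mulE Λ ω hω) (by
    intro x y h
    rcases h with h | h
    · exact Or.inl (by rw [h])
    · exact Or.inr (by rw [h, map_neg]))

/-! ### Auxiliary material -/

section Aux

variable {G : Type*} [AddCommGroup G]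

/-- Negation on the second coordinate, as an additive hom. -/
def nuh (G : Type*) [AddCommGroup G] : G × G →+ G × G :=
  (AddMonoidHom.id G).prodMap (negAddMonoidHom)

lemma nuh_apply (p : G × G) : nuh G p = (p.1, -p.2) := rfl

lemma nuh_nuh (p : G × G) : nuh G (nuh G p) = p := by
  simp [nuh_apply]

lemma nuh_image_image (A : Set (G × G)) : nuh G '' (nuh G '' A) = A := by
  rw [Set.image_image]
  simp only [nuh_nuh, Set.image_id']

/-- The subgroup `{(f^[m] z, g^[m] z) : z ∈ G}` of `G × G`. -/
def Sg (f g : G →+ G) (m : ℕ) : AddSubgroup (G × G) where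
  carrier := Set.range fun z => (f^[m] z, g^[m] z)
  zero_mem' := ⟨0, by simp [iterate_map_zero]⟩
  add_mem' := by
    rintro _ _ ⟨a, rfl⟩ ⟨b, rfl⟩
    exact ⟨a + b, by simp [iterate_map_add, Prod.ext_iff]⟩
  neg_mem' := by
    rintro _ ⟨a, rfl⟩
    exact ⟨-a, by simp [iterate_map_neg, Prod.ext_iff]⟩

lemma mem_Sg {f g : G →+ G} {m : ℕ} {p : G × G} :
    p ∈ Sg f g m ↔ ∃ z, (f^[m] z, g^[m] z) = p := Iff.rfl

/-- A subgroup contained in a union of two subgroups is contained in one of them. -/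
lemma subgroup_le_of_subset_union {H : Type*} [AddCommGroup H] (T S U : AddSubgroup H)
    (h : (T : Set H) ⊆ ↑S ∪ ↑U) : (T : Set H) ⊆ ↑S ∨ (T : Set H) ⊆ ↑U := by
  by_cases hTS : (T : Set H) ⊆ ↑S
  · exact Or.inl hTS
  · right
    rw [Set.not_subset] at hTS
    obtain ⟨b, hbT, hbS⟩ := hTS
    have hbT' : b ∈ T := hbT
    have hbU : b ∈ U := by
      rcases h hbT with h' | h'
      · exact absurd h' hbS
      · exact h'
    intro a haT
    have haT' : a ∈ T := haT
    rcases h haT with haS | haU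
    · have haS' : a ∈ S := haS
      rcases h (T.add_mem haT' hbT') with hab | hab
      · have : b ∈ S := by simpa using S.sub_mem hab haS'
        exact absurd this hbS
      · have hab' : a + b ∈ U := hab
        have : a ∈ U := by simpa using U.sub_mem hab' hbU
        exact this
    · exact haU

end Aux

lemma negRel_equivalence (Λ : AddSubgroup ℂ) : Equivalence (negRel Λ) := by
  constructor
  · intro x; exact Or.inl rfl
  · rintro x y (rfl | rfl)
    · exact Or.inl rfl
    · exact Or.inr (neg_neg y).symm
  · rintro x y z (rfl | rfl) (rfl | rfl)
    · exact Or.inl rfl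
    · exact Or.inr rfl
    · exact Or.inr rfl
    · exact Or.inl (neg_neg z)

lemma qpm_eq_iff (Λ : AddSubgroup ℂ) (x y : EC Λ) :
    qpm Λ x = qpm Λ y ↔ (x = y ∨ x = -y) :=
  Quot.eq.trans ((negRel_equivalence Λ).eqvGen_iff)

/-- Key step: if the image of a subgroup `T` under `q × q` is contained in that of `S`,
then `T` is contained in `S ∪ νS` where `ν` negates the second coordinate. -/
lemma subset_union_of_image_subset (Λ : AddSubgroup ℂ) (S T : AddSubgroup (EC Λ × EC Λ))
    (h : Prod.map (qpm Λ) (qpm Λ) '' (T : Set _) ⊆ Prod.map (qpm Λ) (qpm Λ) '' (S : Set _)) :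
    (T : Set _) ⊆ (S : Set (EC Λ × EC Λ)) ∪ (S.map (nuh (EC Λ)) : Set (EC Λ × EC Λ)) := by
  intro p hp
  obtain ⟨s, hsS, hs⟩ := h ⟨p, hp, rfl⟩
  have hsS' : s ∈ S := hsS
  have h1 : qpm Λ s.1 = qpm Λ p.1 := congrArg Prod.fst hs
  have h2 : qpm Λ s.2 = qpm Λ p.2 := congrArg Prod.snd hs
  rw [qpm_eq_iff] at h1 h2
  rcases h1 with h1 | h1 <;> rcases h2 with h2 | h2
  · left
    have : s = p := Prod.ext h1 h2
    exact this ▸ hsS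
  · right
    refine ⟨s, hsS', ?_⟩
    rw [nuh_apply]
    exact Prod.ext h1 (neg_eq_iff_eq_neg.mpr h2)
  · right
    refine ⟨-s, S.neg_mem hsS', ?_⟩
    rw [nuh_apply]
    have : -s.1 = p.1 := neg_eq_iff_eq_neg.mpr h1
    exact Prod.ext this (by simpa using h2)
  · left
    have : -s = p := Prod.ext (neg_eq_iff_eq_neg.mpr h1) (neg_eq_iff_eq_neg.mpr h2)
    exact this ▸ S.neg_mem hsS

/-- The diagonal `Δ ⊆ E × E` is pre-periodic for `[ω] × [ω']` if and only if the diagonal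
`Δ' ⊆ E/± × E/±` is pre-periodic for `φ_ω × φ_ω'`. -/
theorem diagonal_preperiodic_iff_lattes_diagonal_preperiodic
    (ω₁ ω₂ : ℂ) (hind : LinearIndependent ℝ ![ω₁, ω₂])
    (Λ : AddSubgroup ℂ) (hΛ : Λ = AddSubgroup.closure {ω₁, ω₂})
    (ω ω' : ℂ) (hω0 : ω ≠ 0) (hω'0 : ω' ≠ 0)
    (hω : ∀ x ∈ Λ, ω * x ∈ Λ) (hω' : ∀ x ∈ Λ, ω' * x ∈ Λ) :
    (∃ n k : ℕ, 0 < k ∧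
        (Prod.map ⇑(mulE Λ ω hω) ⇑(mulE Λ ω' hω'))^[n + k] '' Set.diagonal (EC Λ) =
        (Prod.map ⇑(mulE Λ ω hω) ⇑(mulE Λ ω' hω'))^[n] '' Set.diagonal (EC Λ)) ↔
    (∃ n k : ℕ, 0 < k ∧
        (Prod.map (lattes Λ ω hω) (lattes Λ ω' hω'))^[n + k] '' Set.diagonal (ECpm Λ) =
        (Prod.map (lattes Λ ω hω) (lattes Λ ω' hω'))^[n] '' Set.diagonal (ECpm Λ)) := by
  classical
  set f := mulE Λ ω hω with hf
  set g := mulE Λ ω' hω' with hg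
  set F : EC Λ × EC Λ → EC Λ × EC Λ := Prod.map ⇑f ⇑g with hF
  set Φ : ECpm Λ × ECpm Λ → ECpm Λ × ECpm Λ :=
    Prod.map (lattes Λ ω hω) (lattes Λ ω' hω') with hΦ
  set Q : EC Λ × EC Λ → ECpm Λ × ECpm Λ := Prod.map (qpm Λ) (qpm Λ) with hQ
  -- semiconjugacy
  have hsc : Function.Semiconj Q F Φ := fun p => rfl
  have hscm : ∀ m : ℕ, Function.Semiconj Q (F^[m]) (Φ^[m]) := fun m => hsc.iterate_right m
  -- F iterates componentwise
  have hFm : ∀ (m : ℕ) (p : EC Λ × EC Λ), F^[m] p = (f^[m] p.1, g^[m] p.2) := by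
    intro m
    induction m with
    | zero => intro p; rfl
    | succ m ih =>
      intro p
      rw [Function.iterate_succ_apply', ih, Function.iterate_succ_apply',
        Function.iterate_succ_apply']
      rfl
  -- images of the diagonal downstairs
  have hdiag : ∀ m : ℕ, F^[m] '' Set.diagonal (EC Λ) = (Sg f g m : Set _) := by
    intro m
    ext p
    constructor
    · rintro ⟨⟨a, b⟩, hab, rfl⟩
      have hab' : a = b := hab
      subst hab'
      exact ⟨a, show ((⇑f)^[m] a, (⇑g)^[m] a) = F^[m] (a, a) from (hFm m (a, a)).symm⟩
    · rintro ⟨z, rfl⟩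
      exact ⟨(z, z), rfl, hFm m (z, z)⟩
  -- images of the diagonal upstairs
  have hdiagQ : Set.diagonal (ECpm Λ) = Q '' Set.diagonal (EC Λ) := by
    ext p
    constructor
    · intro hp
      have hp' : p.1 = p.2 := hp
      obtain ⟨x, hx⟩ := Quot.exists_rep p.1
      refine ⟨(x, x), rfl, ?_⟩
      have hx' : qpm Λ x = p.1 := hx
      have : Q (x, x) = (qpm Λ x, qpm Λ x) := rfl
      rw [this, hx']
      exact Prod.ext rfl hp'
    · rintro ⟨⟨a, b⟩, hab, rfl⟩
      have hab' : a = b := hab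
      subst hab'
      rfl
  have hdiag' : ∀ m : ℕ, Φ^[m] '' Set.diagonal (ECpm Λ) = Q '' (Sg f g m : Set _) := by
    intro m
    rw [hdiagQ, ← Set.image_comp, ← (hscm m).comp_eq, Set.image_comp, hdiag m]
  simp only [← hF, ← hΦ, hdiag, hdiag']
  constructor
  · rintro ⟨n, k, hk, h⟩
    exact ⟨n, k, hk, by rw [h]⟩
  · rintro ⟨n, k, hk, h⟩
    -- notation
    set S := Sg f g n with hS
    set T := Sg f g (n + k) with hT
    have hsub1 : (T : Set _) ⊆ (S : Set (EC Λ × EC Λ)) ∪ (S.map (nuh (EC Λ)) : Set (EC Λ × EC Λ)) :=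
      subset_union_of_image_subset Λ S T (le_of_eq h)
    have hsub2 : (S : Set _) ⊆ (T : Set (EC Λ × EC Λ)) ∪ (T.map (nuh (EC Λ)) : Set (EC Λ × EC Λ)) :=
      subset_union_of_image_subset Λ T S (le_of_eq h.symm)
    have hcoeS : (S.map (nuh (EC Λ)) : Set _) = nuh (EC Λ) '' ↑S := AddSubgroup.coe_map _ _
    have hcoeT : (T.map (nuh (EC Λ)) : Set _) = nuh (EC Λ) '' ↑T := AddSubgroup.coe_map _ _
    rw [hcoeS] at hsub1
    rw [hcoeT] at hsub2
    -- ν-image monotonicity helper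
    have hmono : ∀ A B : Set (EC Λ × EC Λ), A ⊆ B → nuh (EC Λ) '' A ⊆ nuh (EC Λ) '' B :=
      fun A B hAB => Set.image_mono hAB
    -- F commutes with ν
    have hFν : Function.Semiconj (nuh (EC Λ)) F F := by
      intro p
      have : F (p.1, -p.2) = (f p.1, -(g p.2)) := by
        show (f p.1, g (-p.2)) = (f p.1, -(g p.2))
        rw [map_neg]
      rw [nuh_apply, nuh_apply]
      exact this.symm ▸ rfl
    have hFνm : ∀ (j : ℕ) (A : Set (EC Λ × EC Λ)),
        F^[j] '' (nuh (EC Λ) '' A) = nuh (EC Λ) '' (F^[j] '' A) := by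
      intro j A
      have hc : nuh (EC Λ) ∘ F^[j] = F^[j] ∘ nuh (EC Λ) := (hFν.iterate_right j).comp_eq
      rw [← Set.image_comp, ← hc, Set.image_comp]
    -- stepping lemma
    have hstep : ∀ m j : ℕ, (Sg f g (m + j) : Set _) = F^[j] '' (Sg f g m : Set _) := by
      intro m j
      rw [← hdiag, ← hdiag, add_comm m j, Function.iterate_add, Set.image_comp]
    rcases subgroup_le_of_subset_union T S (S.map (nuh (EC Λ)))
        (by rwa [hcoeS]) with hTS | hTν <;>
      rcases subgroup_le_of_subset_union S T (T.map (nuh (EC Λ)))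
        (by rwa [hcoeT]) with hST | hSν <;>
      [skip; rw [hcoeT] at hSν; rw [hcoeS] at hTν; (rw [hcoeS] at hTν; rw [hcoeT] at hSν)]
    · exact ⟨n, k, hk, Set.Subset.antisymm hTS hST⟩
    · -- T ⊆ S, S ⊆ νT : then νS ⊆ T so S ⊆ νS ⊆ ... conclude S = T
      have h1 : nuh (EC Λ) '' (S : Set _) ⊆ (T : Set _) := by
        have := hmono _ _ hSν
        rwa [nuh_image_image] at this
      have h2 : (S : Set _) ⊆ nuh (EC Λ) '' (S : Set _) := by
        have := hmono _ _ (h1.trans hTS)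
        rwa [nuh_image_image] at this
      exact ⟨n, k, hk, Set.Subset.antisymm (hTS) (h2.trans h1)⟩
    · -- T ⊆ νS, S ⊆ T : then νT ⊆ S ⊆ T so T = νT, hence T ⊆ S
      have h1 : nuh (EC Λ) '' (T : Set _) ⊆ (S : Set _) := by
        have := hmono _ _ hTν
        rwa [nuh_image_image] at this
      have h2 : (T : Set _) ⊆ nuh (EC Λ) '' (T : Set _) := by
        have := hmono _ _ (h1.trans hST)
        rwa [nuh_image_image] at this
      exact ⟨n, k, hk, Set.Subset.antisymm (h2.trans h1) hST⟩
    · -- T = νS; then period 2k works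
      have h1 : nuh (EC Λ) '' (S : Set _) ⊆ (T : Set _) := by
        have := hmono _ _ hSν
        rwa [nuh_image_image] at this
      have hTeq : (T : Set _) = nuh (EC Λ) '' (S : Set _) := Set.Subset.antisymm hTν h1
      refine ⟨n, k + k, by omega, ?_⟩
      have e1 : n + (k + k) = (n + k) + k := by omega
      calc (Sg f g (n + (k + k)) : Set _)
          = (Sg f g ((n + k) + k) : Set _) := by rw [e1]
        _ = F^[k] '' (Sg f g (n + k) : Set _) := hstep _ _
        _ = F^[k] '' (nuh (EC Λ) '' (S : Set _)) := by rw [← hT, hTeq]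
        _ = nuh (EC Λ) '' (F^[k] '' (S : Set _)) := hFνm _ _
        _ = nuh (EC Λ) '' (Sg f g (n + k) : Set _) := by rw [hstep n k, hS]
        _ = nuh (EC Λ) '' (nuh (EC Λ) '' (S : Set _)) := by rw [← hT, hTeq]
        _ = (S : Set _) := nuh_image_image _
end
end

section
/- Let Λ ⊆ ℂ be a lattice and let ω, ω' ∈ ℂ be nonzero with ω·Λ ⊆ Λ and ω'·Λ ⊆ Λ. The diagonal Δ ⊆ E × E is pre-periodic for [ω] × [ω'] : E × E → E × E if and only if there exists a positive integer k with ω^k = ω'^k (equivalently, ω/ω' is a root of unity). -/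
open Complex

noncomputable section

/-!
Both iterates of the diagonal are parametrised by `ℂ`: `([ω] × [ω'])^m Δ` is the image of
`z ↦ (ω^m z, ω'^m z)`. If the `(n + k)`-th image lies in the `n`-th one, then for every `z` there
is `w` with `ω^(n+k) z ≡ ω^n w` and `ω'^(n+k) z ≡ ω'^n w` modulo `Λ`; eliminating `w` gives
`ω^n ω'^n (ω^k - ω'^k) z ∈ Λ` for all `z ∈ ℂ`, which forces `ω^k = ω'^k` because `Λ` is countable.
Conversely, if `ω^k = ω'^k` then `[ω^k] × [ω'^k]` maps `Δ` onto itself, `[ω^k]` being surjective.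
-/

open Set

theorem Set.image_iterate_prodMap_diagonal {α : Type*} (f g : α → α) (m : ℕ) :
    (Prod.map f g)^[m] '' diagonal α = range fun x => (f^[m] x, g^[m] x) := by
  rw [Prod.map_iterate, ← range_diag, ← range_comp]
  rfl

theorem AddSubgroup.countable_closure_pair {G : Type*} [AddCommGroup G] (a b : G) :
    ((closure {a, b} : AddSubgroup G) : Set G).Countable :=
  (countable_range fun p : ℤ × ℤ => p.1 • a + p.2 • b).mono fun x hx =>
    let ⟨m, n, h⟩ := mem_closure_pair.mp hx
    show x ∈ range _ from ⟨(m, n), h⟩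

theorem eq_zero_of_forall_mul_mem {R : Type*} [MulZeroClass R] [IsLeftCancelMulZero R]
    [Uncountable R] {S : Set R} (hS : S.Countable) {c : R} (hc : ∀ z, c * z ∈ S) : c = 0 := by
  by_contra hc0
  refine not_countable_univ ((hS.preimage fun _ _ => mul_left_cancel₀ hc0).mono ?_)
  exact fun z _ => hc z

theorem pow_mul_mem_of_forall_mul_mem {M : Type*} [Monoid M] {S : Set M} {a : M}
    (ha : ∀ x ∈ S, a * x ∈ S) (m : ℕ) {x : M} (hx : x ∈ S) : a ^ m * x ∈ S := by
  induction m with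
  | zero => simpa using hx
  | succ m ih => simpa [pow_succ', mul_assoc] using ha _ ih

section EllipticCurve

variable {Λ : AddSubgroup ℂ} {ω ω' : ℂ}

theorem mulE_iterate_mk (hω : ∀ x ∈ Λ, ω * x ∈ Λ) (m : ℕ) (z : ℂ) :
    (mulE Λ ω hω)^[m] (z : EC Λ) = ((ω ^ m * z : ℂ) : EC Λ) := by
  induction m with
  | zero => simp
  | succ m ih =>
    rw [Function.iterate_succ_apply', ih, pow_succ', mul_assoc]
    rfl

theorem image_iterate_mulE_prodMap_diagonal (hω : ∀ x ∈ Λ, ω * x ∈ Λ)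
    (hω' : ∀ x ∈ Λ, ω' * x ∈ Λ) (m : ℕ) :
    (Prod.map (mulE Λ ω hω) (mulE Λ ω' hω'))^[m] '' diagonal (EC Λ) =
      range fun z : ℂ => (((ω ^ m * z : ℂ) : EC Λ), ((ω' ^ m * z : ℂ) : EC Λ)) := by
  rw [image_iterate_prodMap_diagonal, ← QuotientAddGroup.mk_surjective.range_comp]
  simp only [Function.comp_def, mulE_iterate_mk]

theorem pow_eq_pow_of_range_subset (hΛ : (Λ : Set ℂ).Countable) (hω0 : ω ≠ 0) (hω'0 : ω' ≠ 0)
    (hω : ∀ x ∈ Λ, ω * x ∈ Λ) (hω' : ∀ x ∈ Λ, ω' * x ∈ Λ) {n k : ℕ}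
    (h : (range fun z : ℂ => (((ω ^ (n + k) * z : ℂ) : EC Λ), ((ω' ^ (n + k) * z : ℂ) : EC Λ)))
      ⊆ range fun z : ℂ => (((ω ^ n * z : ℂ) : EC Λ), ((ω' ^ n * z : ℂ) : EC Λ))) :
    ω ^ k = ω' ^ k := by
  have hmem : ∀ z, ω ^ n * ω' ^ n * (ω ^ k - ω' ^ k) * z ∈ Λ := by
    intro z
    obtain ⟨w, hw⟩ := h ⟨z, rfl⟩
    simp only [Prod.mk.injEq, QuotientAddGroup.eq] at hw
    convert Λ.sub_mem (pow_mul_mem_of_forall_mul_mem hω' n hw.1)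
      (pow_mul_mem_of_forall_mul_mem hω n hw.2) using 1
    ring
  have : Uncountable ℂ := ofReal_injective.uncountable
  have hzero := eq_zero_of_forall_mul_mem hΛ hmem
  simpa [hω0, hω'0, sub_eq_zero] using hzero

end EllipticCurve

theorem diagonal_preperiodic_iff_ratio_root_of_unity_general
    (ω₁ ω₂ : ℂ)
    (Λ : AddSubgroup ℂ) (hΛ : Λ = AddSubgroup.closure {ω₁, ω₂})
    (ω ω' : ℂ) (hω0 : ω ≠ 0) (hω'0 : ω' ≠ 0)
    (hω : ∀ x ∈ Λ, ω * x ∈ Λ) (hω' : ∀ x ∈ Λ, ω' * x ∈ Λ) :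
    (∃ n k : ℕ, 0 < k ∧
        (Prod.map ⇑(mulE Λ ω hω) ⇑(mulE Λ ω' hω'))^[n + k] '' Set.diagonal (EC Λ) =
        (Prod.map ⇑(mulE Λ ω hω) ⇑(mulE Λ ω' hω'))^[n] '' Set.diagonal (EC Λ)) ↔
    (∃ k : ℕ, 0 < k ∧ ω ^ k = ω' ^ k) := by
  have hcount : (Λ : Set ℂ).Countable := hΛ ▸ AddSubgroup.countable_closure_pair ω₁ ω₂
  simp only [image_iterate_mulE_prodMap_diagonal]
  constructor
  · rintro ⟨n, k, hk, hset⟩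
    exact ⟨k, hk, pow_eq_pow_of_range_subset hcount hω0 hω'0 hω hω' hset.subset⟩
  · rintro ⟨k, hk, hpow⟩
    refine ⟨0, k, hk, ?_⟩
    simp only [zero_add, pow_zero, one_mul, hpow]
    exact (mul_left_surjective₀ (pow_ne_zero k hω'0)).range_comp
      fun z : ℂ => ((z : EC Λ), (z : EC Λ))

/-- The diagonal `Δ ⊆ E × E` is pre-periodic for `[ω] × [ω']` if and only if `ω^k = ω'^k`
for some positive integer `k` (i.e. `ω/ω'` is a root of unity). -/
theorem diagonal_preperiodic_iff_ratio_root_of_unity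
    (ω₁ ω₂ : ℂ) (hind : LinearIndependent ℝ ![ω₁, ω₂])
    (Λ : AddSubgroup ℂ) (hΛ : Λ = AddSubgroup.closure {ω₁, ω₂})
    (ω ω' : ℂ) (hω0 : ω ≠ 0) (hω'0 : ω' ≠ 0)
    (hω : ∀ x ∈ Λ, ω * x ∈ Λ) (hω' : ∀ x ∈ Λ, ω' * x ∈ Λ) :
    (∃ n k : ℕ, 0 < k ∧
        (Prod.map ⇑(mulE Λ ω hω) ⇑(mulE Λ ω' hω'))^[n + k] '' Set.diagonal (EC Λ) =
        (Prod.map ⇑(mulE Λ ω hω) ⇑(mulE Λ ω' hω'))^[n] '' Set.diagonal (EC Λ)) ↔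
    (∃ k : ℕ, 0 < k ∧ ω ^ k = ω' ^ k) :=
  diagonal_preperiodic_iff_ratio_root_of_unity_general ω₁ ω₂ Λ hΛ ω ω' hω0 hω'0 hω hω'
end
end

section
/- Let Λ = ℤ + ℤi ⊆ ℂ be the Gaussian lattice and E = ℂ/Λ, and take ω = 2 + i and ω' = 1 − 2i (so that ω·Λ ⊆ Λ and ω'·Λ ⊆ Λ, and ω² = −ω'²). Then the diagonal Δ' ⊆ E/± × E/± satisfies (φ_ω × φ_{ω'})^{2}(Δ') = Δ'; that is, Δ' is pre-periodic for φ_ω × φ_{ω'} with pair (0,2). -/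
/-!
The squares `(2 + i)² = 3 + 4i` and `(1 - 2i)² = -(3 + 4i)` agree up to sign, and the
Lattès map of `[ω]` only depends on `±ω`. Hence the second iterate of `φ_ω × φ_ω'` is `φ × φ`
for the single map `φ = φ_{3+4i}`, which is surjective because multiplication by a nonzero
complex number is onto `ℂ/Λ`; and `φ × φ` maps the diagonal onto the diagonal.
-/

open Complex

noncomputable section

open Set in
theorem Set.image_prodMap_diagonal_of_surjective {α β : Type*} {f : α → β}
    (hf : Function.Surjective f) : Prod.map f f '' diagonal α = diagonal β := by
  rw [← range_diag, ← range_comp, ← range_diag]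
  exact hf.range_comp Function.diag

section Lattes

variable {Λ : AddSubgroup ℂ} {ω ω' : ℂ}

theorem mulE_mk (hω : ∀ x ∈ Λ, ω * x ∈ Λ) (c : ℂ) :
    mulE Λ ω hω c = ((ω * c : ℂ) : EC Λ) :=
  rfl

theorem mulE_mulE (hω : ∀ x ∈ Λ, ω * x ∈ Λ) (hω' : ∀ x ∈ Λ, ω' * x ∈ Λ)
    (hωω' : ∀ x ∈ Λ, ω * ω' * x ∈ Λ) (x : EC Λ) :
    mulE Λ ω hω (mulE Λ ω' hω' x) = mulE Λ (ω * ω') hωω' x := by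
  induction x using QuotientAddGroup.induction_on with
  | H c => rw [mulE_mk, mulE_mk, mulE_mk, mul_assoc]

theorem mulE_neg_left (hω : ∀ x ∈ Λ, ω * x ∈ Λ) (hnω : ∀ x ∈ Λ, -ω * x ∈ Λ) (x : EC Λ) :
    mulE Λ (-ω) hnω x = -mulE Λ ω hω x := by
  induction x using QuotientAddGroup.induction_on with
  | H c => rw [mulE_mk, mulE_mk, neg_mul, QuotientAddGroup.mk_neg]

theorem mulE_surjective (hω : ∀ x ∈ Λ, ω * x ∈ Λ) (hω0 : ω ≠ 0) :
    Function.Surjective (mulE Λ ω hω) := by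
  intro x
  induction x using QuotientAddGroup.induction_on with
  | H c => exact ⟨(ω⁻¹ * c : ℂ), by rw [mulE_mk, mul_inv_cancel_left₀ hω0]⟩

theorem qpm_neg (x : EC Λ) : qpm Λ (-x) = qpm Λ x :=
  Quot.sound (Or.inr rfl)

theorem lattes_comp_of_mul_eq {ω'' : ℂ} (hω : ∀ x ∈ Λ, ω * x ∈ Λ)
    (hω' : ∀ x ∈ Λ, ω' * x ∈ Λ) (hω'' : ∀ x ∈ Λ, ω'' * x ∈ Λ) (h : ω * ω' = ω'') :
    lattes Λ ω hω ∘ lattes Λ ω' hω' = lattes Λ ω'' hω'' := by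
  subst h
  funext p
  induction p using Quot.ind with
  | mk x => exact congrArg (qpm Λ) (mulE_mulE hω hω' hω'' x)

theorem lattes_neg (hω : ∀ x ∈ Λ, ω * x ∈ Λ) (hnω : ∀ x ∈ Λ, -ω * x ∈ Λ) :
    lattes Λ (-ω) hnω = lattes Λ ω hω := by
  funext p
  induction p using Quot.ind with
  | mk x => exact (congrArg (qpm Λ) (mulE_neg_left hω hnω x)).trans (qpm_neg _)

theorem lattes_surjective (hω : ∀ x ∈ Λ, ω * x ∈ Λ) (hω0 : ω ≠ 0) :
    Function.Surjective (lattes Λ ω hω) := by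
  intro p
  obtain ⟨x, rfl⟩ := Quot.mk_surjective.comp (mulE_surjective hω hω0) p
  exact ⟨qpm Λ x, rfl⟩

end Lattes

theorem gaussian_lattes_diagonal_period_two_general
    (Λ : AddSubgroup ℂ)
    (hω : ∀ x ∈ Λ, (2 + Complex.I) * x ∈ Λ)
    (hω' : ∀ x ∈ Λ, (1 - 2 * Complex.I) * x ∈ Λ) :
    (Prod.map (lattes Λ (2 + Complex.I) hω) (lattes Λ (1 - 2 * Complex.I) hω'))^[2] ''
        Set.diagonal (ECpm Λ) = Set.diagonal (ECpm Λ) := by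
  have hsq : (2 + I) * (2 + I) = 3 + 4 * I := by linear_combination I_sq
  have hsq' : (1 - 2 * I) * (1 - 2 * I) = -(3 + 4 * I) := by linear_combination 4 * I_sq
  have h34 : ∀ x ∈ Λ, (3 + 4 * I) * x ∈ Λ := fun x hx => by
    rw [← hsq, mul_assoc]
    exact hω _ (hω x hx)
  have hn34 : ∀ x ∈ Λ, -(3 + 4 * I) * x ∈ Λ := fun x hx => by
    rw [← hsq', mul_assoc]
    exact hω' _ (hω' x hx)
  have h34_ne : (3 + 4 * I : ℂ) ≠ 0 := fun h => by simpa using congrArg re h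
  rw [Prod.map_iterate, Function.iterate_succ, Function.iterate_one, Function.iterate_succ,
    Function.iterate_one, lattes_comp_of_mul_eq hω hω h34 hsq,
    lattes_comp_of_mul_eq hω' hω' hn34 hsq', lattes_neg h34 hn34]
  exact Set.image_prodMap_diagonal_of_surjective (lattes_surjective h34 h34_ne)

/-- For the Gaussian lattice `Λ = ℤ + ℤi`, `ω = 2 + i` and `ω' = 1 - 2i`, the diagonal
`Δ' ⊆ E/± × E/±` satisfies `(φ_ω × φ_ω')^[2] Δ' = Δ'`: it is pre-periodic with pair `(0, 2)`. -/
theorem gaussian_lattes_diagonal_period_two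
    (Λ : AddSubgroup ℂ) (hΛ : Λ = AddSubgroup.closure {(1 : ℂ), Complex.I})
    (hω : ∀ x ∈ Λ, (2 + Complex.I) * x ∈ Λ)
    (hω' : ∀ x ∈ Λ, (1 - 2 * Complex.I) * x ∈ Λ) :
    (Prod.map (lattes Λ (2 + Complex.I) hω) (lattes Λ (1 - 2 * Complex.I) hω'))^[2] ''
        Set.diagonal (ECpm Λ) = Set.diagonal (ECpm Λ) :=
  gaussian_lattes_diagonal_period_two_general Λ hω hω'
end
end
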